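/- arXiv:1011.0894 — 4 statements merged into one kernel-verified Lean document; each statement's English description precedes it below -/
import Mathlib

section
/- For the 3×3 matrix B with rows (0, 2, 0), (-2, 0, 1), (0, -1, 0), every matrix obtained from B by any finite sequence of mutations μ_{i_1},...,μ_{i_k} (with each i_j ∈ {1,2,3}) has even (1,2)-entry and even (1,3)-entry. -/
/-! Mutation at `k` changes an entry `b_ij` with `i, j ≠ k` by `± max 0 (b_ik b_kj)`, which is even
as soon as `b_ik` or `b_kj` is; every other entry only changes sign. Hence the property "row `p`
and column `p` are even" survives every mutation, and row and column `0` of `B₀` are even. -/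

def mutB (B : Matrix (Fin 3) (Fin 3) ℤ) (k : Fin 3) : Matrix (Fin 3) (Fin 3) ℤ :=
  fun i j => if i = k ∨ j = k then -B i j
    else B i j + Int.sign (B i k) * max 0 (B i k * B k j)

def B₀ : Matrix (Fin 3) (Fin 3) ℤ := !![0, 2, 0; -2, 0, 1; 0, -1, 0]

lemma Even.max_zero {a : ℤ} (ha : Even a) : Even (max 0 a) := by
  rcases max_choice 0 a with h | h <;> rw [h]
  exacts [Even.zero, ha]

lemma even_mutB_apply {B : Matrix (Fin 3) (Fin 3) ℤ} {k i j : Fin 3} (hij : Even (B i j))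
    (hk : Even (B i k * B k j)) : Even (mutB B k i j) := by
  unfold mutB
  split_ifs
  · exact hij.neg
  · exact hij.add (hk.max_zero.mul_left _)

def RowColEven (p : Fin 3) (B : Matrix (Fin 3) (Fin 3) ℤ) : Prop :=
  ∀ j, Even (B p j) ∧ Even (B j p)

lemma rowColEven_mutB {p : Fin 3} {B : Matrix (Fin 3) (Fin 3) ℤ} (h : RowColEven p B)
    (k : Fin 3) : RowColEven p (mutB B k) := fun j =>
  ⟨even_mutB_apply (h j).1 ((h k).1.mul_right _), even_mutB_apply (h j).2 ((h k).2.mul_left _)⟩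

lemma rowColEven_foldl_mutB {p : Fin 3} (l : List (Fin 3)) {B : Matrix (Fin 3) (Fin 3) ℤ}
    (h : RowColEven p B) : RowColEven p (l.foldl mutB B) := by
  induction l generalizing B with
  | nil => exact h
  | cons k l ih => exact ih (rowColEven_mutB h k)

theorem mut_seq_even_entries (l : List (Fin 3)) :
    Even ((l.foldl mutB B₀) 0 1) ∧ Even ((l.foldl mutB B₀) 0 2) := by
  have h₀ : RowColEven 0 B₀ := by unfold RowColEven; decide
  have h := rowColEven_foldl_mutB l h₀
  exact ⟨(h 1).1, (h 2).1⟩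
end

section
/- For the 3×3 matrix B with rows (0, 2, 0), (-2, 0, 1), (0, -1, 0), every matrix obtained from B by any finite sequence of mutations has odd (2,3)-entry. In particular the (2,3)-entry is never zero under any sequence of mutations. -/
def Pinv (B : Matrix (Fin 3) (Fin 3) ℤ) : Prop :=
  Even (B 0 1) ∧ Even (B 0 2) ∧ Odd (B 1 2)

lemma even_sign_mul_max {x y : ℤ} (hy : Even y) : Even (Int.sign x * max 0 y) := by
  have h : Even (max 0 y) := by
    rcases max_choice 0 y with h | h <;> rw [h]
    · exact Even.zero
    · exact hy
  exact h.mul_left _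

lemma Pinv_mut (B : Matrix (Fin 3) (Fin 3) ℤ) (k : Fin 3) (h : Pinv B) :
    Pinv (mutB B k) := by
  obtain ⟨h01, h02, h12⟩ := h
  fin_cases k <;>
  · refine ⟨?_, ?_, ?_⟩ <;> simp only [mutB] <;> norm_num
    all_goals first
      | exact h01 | exact h02 | exact h12
      | exact h01.neg | exact h02.neg | exact h12.neg
      | exact h12.add_even (even_sign_mul_max (h02.mul_left _))
      | exact h02.add (even_sign_mul_max (h01.mul_right _))
      | exact h01.add (even_sign_mul_max (h02.mul_right _))

lemma Pinv_foldl (l : List (Fin 3)) (B : Matrix (Fin 3) (Fin 3) ℤ) (h : Pinv B) :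
    Pinv (l.foldl mutB B) := by
  induction l generalizing B with
  | nil => exact h
  | cons k t ih => exact ih _ (Pinv_mut B k h)

theorem mut_seq_odd_23_entry (l : List (Fin 3)) :
    Odd ((l.foldl mutB B₀) 1 2) ∧ (l.foldl mutB B₀) 1 2 ≠ 0 := by
  have h0 : Pinv B₀ := by
    refine ⟨?_, ?_, ?_⟩ <;> simp [B₀] <;> decide
  have h := Pinv_foldl l B₀ h0
  refine ⟨h.2.2, fun hz => ?_⟩
  have := h.2.2
  rw [hz] at this
  exact (Int.not_odd_iff_even.mpr Even.zero) this
end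

section
/- There is no finite sequence of mutations taking the 3×3 matrix with rows (0, 2, 0), (-2, 0, 1), (0, -1, 0) to the matrix with rows (0, -2, 1), (2, 0, 0), (-1, 0, 0). -/
/-!
A row all of whose entries are even stays so under every mutation: the entries in the
mutated row are only negated or shifted by a multiple of `B i k`, which is even. Row `0`
of `B₀` is even, while row `0` of the target contains a `1`.
-/

lemma even_sign_mul_max_zero_mul {a : ℤ} (ha : Even a) (b : ℤ) :
    Even (Int.sign a * max 0 (a * b)) := by
  refine Even.mul_left ?_ _
  rcases max_choice 0 (a * b) with h | h <;> rw [h]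
  · exact Even.zero
  · exact ha.mul_right b

lemma even_mutB_row {B : Matrix (Fin 3) (Fin 3) ℤ} {i : Fin 3} (hB : ∀ j, Even (B i j))
    (k : Fin 3) (j : Fin 3) : Even (mutB B k i j) := by
  unfold mutB
  split_ifs
  · exact (hB j).neg
  · exact (hB j).add (even_sign_mul_max_zero_mul (hB k) _)

lemma even_foldl_mutB_row {B : Matrix (Fin 3) (Fin 3) ℤ} {i : Fin 3} (hB : ∀ j, Even (B i j))
    (l : List (Fin 3)) (j : Fin 3) : Even (l.foldl mutB B i j) := by
  induction l generalizing B with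
  | nil => exact hB j
  | cons k l ih => exact ih (even_mutB_row hB k)

theorem no_mut_seq_to_target :
    ¬ ∃ l : List (Fin 3),
      l.foldl mutB B₀ = !![0, -2, 1; 2, 0, 0; -1, 0, 0] := by
  rintro ⟨l, hl⟩
  have hB₀ : ∀ j, Even (B₀ 0 j) := by decide
  have h := even_foldl_mutB_row hB₀ l 2
  rw [hl] at h
  exact Int.not_even_one h
end

section
/- Laurent phenomenon in rank 2, type A_2: every term of the sequence defined by x_{m+1} = (x_m + 1)/x_{m-1} in ℚ(x_1, x_2) is a Laurent polynomial in x_1 and x_2 with integer coefficients, i.e., lies in ℤ[x_1^{±1}, x_2^{±1}]. -/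
/-!
The recurrence is periodic of period 5: starting from `x₁, x₂` it produces
`(x₂ + 1)/x₁`, `(x₁ + x₂ + 1)/(x₁ x₂)`, `(x₁ + 1)/x₂` and then `x₁, x₂` again, and each of
these five values is visibly a Laurent polynomial. Since none of them is zero (the numerators
have constant term 1), the recurrence can be solved for `x (m + 2)`, so the sequence coincides
with this periodic one.
-/

/-- The field ℚ(x₁, x₂): fraction field of the polynomial ring in two variables. -/
noncomputable abbrev F2 : Type := FractionRing (MvPolynomial (Fin 2) ℚ)

noncomputable def X1 : F2 := algebraMap (MvPolynomial (Fin 2) ℚ) F2 (MvPolynomial.X 0)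
noncomputable def X2 : F2 := algebraMap (MvPolynomial (Fin 2) ℚ) F2 (MvPolynomial.X 1)

/-- `z` is a Laurent polynomial in `x₁, x₂` with integer coefficients. -/
def IsIntLaurent (z : F2) : Prop :=
  ∃ (p : MvPolynomial (Fin 2) ℤ) (a b : ℕ),
    z * X1 ^ a * X2 ^ b = MvPolynomial.eval₂ (Int.castRingHom F2) ![X1, X2] p

theorem eq_of_a2_recurrence {R : Type*} [Ring R] [IsDomain R] {x y : ℕ → R}
    (hx : ∀ n, x (n + 2) * x n = x (n + 1) + 1) (hy : ∀ n, y (n + 2) * y n = y (n + 1) + 1)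
    (hy_ne : ∀ n, y n ≠ 0) (h0 : x 0 = y 0) (h1 : x 1 = y 1) : x = y := by
  funext n
  induction n using Nat.twoStepInduction with
  | zero => exact h0
  | one => exact h1
  | more n hn hn1 =>
    apply mul_right_cancel₀ (hy_ne n)
    rw [hy, ← hn1, ← hn, hx]

section Periodic

variable {K : Type*} [Field K]

noncomputable def a2Seq (a b : K) : ℕ → K
  | 0 => a
  | 1 => b
  | 2 => (b + 1) / a
  | 3 => (a + b + 1) / (a * b)
  | 4 => (a + 1) / b
  | n + 5 => a2Seq a b n

theorem a2Seq_recurrence {a b : K} (ha : a ≠ 0) (hb : b ≠ 0) :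
    ∀ n, a2Seq a b (n + 2) * a2Seq a b n = a2Seq a b (n + 1) + 1
  | 0 => by simp only [a2Seq]; field_simp
  | 1 => by simp only [a2Seq]; field_simp; ring
  | 2 => by simp only [a2Seq]; field_simp; ring
  | 3 => by simp only [a2Seq]; field_simp; ring
  | 4 => by simp only [a2Seq]; field_simp
  | n + 5 => a2Seq_recurrence ha hb n

theorem a2Seq_ne_zero {a b : K} (ha : a ≠ 0) (hb : b ≠ 0) (ha1 : a + 1 ≠ 0) (hb1 : b + 1 ≠ 0)
    (hab1 : a + b + 1 ≠ 0) : ∀ n, a2Seq a b n ≠ 0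
  | 0 => ha
  | 1 => hb
  | 2 => div_ne_zero hb1 ha
  | 3 => div_ne_zero hab1 (mul_ne_zero ha hb)
  | 4 => div_ne_zero ha1 hb
  | n + 5 => a2Seq_ne_zero ha hb ha1 hb1 hab1 n

end Periodic

open MvPolynomial

theorem algebraMap_ne_zero_of_constantCoeff_ne_zero {σ R : Type*} [CommRing R] [IsDomain R]
    {p : MvPolynomial σ R} (h : constantCoeff p ≠ 0) :
    algebraMap _ (FractionRing (MvPolynomial σ R)) p ≠ 0 :=
  (map_ne_zero_iff _ (IsFractionRing.injective _ _)).mpr fun hp => h (by simp [hp])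

theorem X1_ne_zero : X1 ≠ 0 := by simp [X1]
theorem X2_ne_zero : X2 ≠ 0 := by simp [X2]

theorem X1_add_one_ne_zero : X1 + 1 ≠ 0 := by
  rw [X1, ← map_one (algebraMap (MvPolynomial (Fin 2) ℚ) F2), ← map_add]
  exact algebraMap_ne_zero_of_constantCoeff_ne_zero (by simp)

theorem X2_add_one_ne_zero : X2 + 1 ≠ 0 := by
  rw [X2, ← map_one (algebraMap (MvPolynomial (Fin 2) ℚ) F2), ← map_add]
  exact algebraMap_ne_zero_of_constantCoeff_ne_zero (by simp)

theorem X1_add_X2_add_one_ne_zero : X1 + X2 + 1 ≠ 0 := by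
  rw [X1, X2, ← map_one (algebraMap (MvPolynomial (Fin 2) ℚ) F2), ← map_add, ← map_add]
  exact algebraMap_ne_zero_of_constantCoeff_ne_zero (by simp)

theorem isIntLaurent_of_eval₂_eq {z : F2} (p : MvPolynomial (Fin 2) ℤ)
    (h : eval₂ (Int.castRingHom F2) ![X1, X2] p = z) : IsIntLaurent z :=
  ⟨p, 0, 0, by simp [h]⟩

theorem IsIntLaurent.div_X1 {z : F2} (hz : IsIntLaurent z) : IsIntLaurent (z / X1) := by
  obtain ⟨p, a, b, h⟩ := hz
  refine ⟨p, a + 1, b, ?_⟩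
  rw [← h, pow_succ]
  field_simp [X1_ne_zero]

theorem IsIntLaurent.div_X2 {z : F2} (hz : IsIntLaurent z) : IsIntLaurent (z / X2) := by
  obtain ⟨p, a, b, h⟩ := hz
  refine ⟨p, a, b + 1, ?_⟩
  rw [← h, pow_succ]
  field_simp [X2_ne_zero]

theorem isIntLaurent_a2Seq : ∀ n, IsIntLaurent (a2Seq X1 X2 n)
  | 0 => isIntLaurent_of_eval₂_eq (X 0) (by simp [a2Seq])
  | 1 => isIntLaurent_of_eval₂_eq (X 1) (by simp [a2Seq])
  | 2 => (isIntLaurent_of_eval₂_eq (X 1 + 1) (by simp)).div_X1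
  | 3 => by
    rw [a2Seq, ← div_div]
    exact (isIntLaurent_of_eval₂_eq (X 0 + X 1 + 1) (by simp)).div_X1.div_X2
  | 4 => (isIntLaurent_of_eval₂_eq (X 0 + 1) (by simp)).div_X2
  | n + 5 => isIntLaurent_a2Seq n

/-- Laurent phenomenon in rank 2, type A₂. -/
theorem typeA2_laurent (x : ℕ → F2)
    (h1 : x 1 = X1) (h2 : x 2 = X2)
    (hrec : ∀ m, 1 ≤ m → x (m + 2) * x m = x (m + 1) + 1) :
    ∀ m, 1 ≤ m → IsIntLaurent (x m) := by
  have hx : (fun n => x (n + 1)) = a2Seq X1 X2 :=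
    eq_of_a2_recurrence (fun n => hrec (n + 1) n.succ_pos) (a2Seq_recurrence X1_ne_zero X2_ne_zero)
      (a2Seq_ne_zero X1_ne_zero X2_ne_zero X1_add_one_ne_zero X2_add_one_ne_zero
        X1_add_X2_add_one_ne_zero) h1 h2
  intro m hm
  obtain ⟨n, rfl⟩ := Nat.exists_eq_add_of_le' hm
  rw [show x (n + 1) = a2Seq X1 X2 n from congrFun hx n]
  exact isIntLaurent_a2Seq n
end
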